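/- For a real number q with 0<q<1, nonnegative integer a, and positive integer n, the q-multiple harmonic sum on a string of a twos satisfies H_n^*[{2}^a] = ∑_{k=1}^n ((1+q^k)/[k]_q^{2a}) · ([n choose k]_q / [n+k choose k]_q) · (-1)^{k-1} q^{k(k-1)/2 + ak}. -/

import Mathlib

open Finset

/-- q-analogue of a natural number: [m]_q = (1-q^m)/(1-q). -/
noncomputable def qnum (q : ℝ) (m : ℕ) : ℝ := (1 - q ^ m) / (1 - q)

/-- q-Pochhammer (q;q)_n = ∏_{k=0}^{n-1} (1 - q^{k+1}). -/
noncomputable def qPoch (q : ℝ) (n : ℕ) : ℝ := ∏ k ∈ Finset.range n, (1 - q ^ (k + 1))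

/-- Gaussian q-binomial coefficient, 0 when m > n. -/
noncomputable def qbinom (q : ℝ) (n m : ℕ) : ℝ :=
  if m ≤ n then qPoch q n / (qPoch q m * qPoch q (n - m)) else 0

/-- q-multiple harmonic star sum H_n^*[s₁,…,s_m]. -/
noncomputable def qHstar (q : ℝ) : List ℕ → ℕ → ℝ
  | [], _ => 1
  | s :: rest, n => ∑ k ∈ Finset.Icc 1 n, q ^ k / qnum q k ^ s * qHstar q rest k

/-- q-multiple zeta star value ζ_q^*[s₁,…,s_m]. -/
noncomputable def qZetaStar (q : ℝ) : List ℕ → ℝ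
  | [] => 1
  | s :: rest => ∑' k : ℕ, q ^ (k + 1) / qnum q (k + 1) ^ s * qHstar q rest (k + 1)

/-- strict multiple harmonic sum ∑_{n ≥ k₁ > … > k_r ≥ 1} ∏ 1/k_j^{p_j}. -/
noncomputable def Hstrict : List ℕ → ℕ → ℝ
  | [], _ => 1
  | p :: rest, n => ∑ k ∈ Finset.Icc 1 n, (1 : ℝ) / (k : ℝ) ^ p * Hstrict rest (k - 1)

/-- binomial-weighted strict multiple harmonic sum Ĥ_n(p). -/
noncomputable def Hhat : List ℕ → ℕ → ℝ
  | [], _ => 1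
  | p :: rest, n => ∑ k ∈ Finset.Icc 1 n,
      ((n.choose k : ℝ) / ((n + k).choose n)) * ((1 : ℝ) / (k : ℝ) ^ p) * Hstrict rest (k - 1)

/-- ordinary multiple harmonic star sum H_n^*(s₁,…,s_m). -/
noncomputable def HstarO : List ℕ → ℕ → ℝ
  | [], _ => 1
  | s :: rest, n => ∑ k ∈ Finset.Icc 1 n, (1 : ℝ) / (k : ℝ) ^ s * HstarO rest k

/-- ordinary multiple zeta star value. -/
noncomputable def zetaStarO : List ℕ → ℝ
  | [] => 1
  | s :: rest => ∑' k : ℕ, (1 : ℝ) / ((k : ℝ) + 1) ^ s * HstarO rest (k + 1)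

/-- Merge a list of parts according to a comma(true)/plus(false) pattern. -/
def mergeComp : ℕ → List ℕ → List Bool → List ℕ
  | a, [], _ => [a]
  | a, _ :: _, [] => [a]
  | a, b :: t, true :: bs => a :: mergeComp b t bs
  | a, b :: t, false :: bs => mergeComp (a + b) t bs

/-!
Write `T_a(n, k)` for the `k`-th summand of the right-hand side. For `a = 0` the partial sums
`∑_{j ≤ k} T_0(n, j)` have a closed form (one minus a single hypergeometric term), which at
`k = n` collapses to `1 = H_n^*[∅]`. For `a + 1`, the summands satisfy the same recursion in `n`
as the harmonic sums, `T_{a+1}(n+1, k) = T_{a+1}(n, k) + q^{n+1}/[n+1]_q^2 · T_a(n+1, k)`,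
so induction on `a` and then on `n` finishes the proof. All identities are rational in `q`, so
it suffices that no `1 - q^m` (`m ≥ 1`) vanishes, i.e. `|q| ≠ 1`.
-/

noncomputable def qHstarTwosTerm (q : ℝ) (a n k : ℕ) : ℝ :=
  (1 + q ^ k) / qnum q k ^ (2 * a) * (qbinom q n k / qbinom q (n + k) k) *
    (-1 : ℝ) ^ (k - 1) * q ^ (k * (k - 1) / 2 + a * k)

section

variable {q : ℝ}

lemma one_sub_pow_ne_zero_of_abs_ne_one (hq : |q| ≠ 1) {m : ℕ} (hm : m ≠ 0) :
    1 - q ^ m ≠ 0 := by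
  rw [sub_ne_zero, ne_comm]
  intro h
  apply hq
  rw [← pow_eq_one_iff_of_nonneg (abs_nonneg q) hm, pow_abs, h, abs_one]

lemma qPoch_ne_zero (hq : |q| ≠ 1) (n : ℕ) : qPoch q n ≠ 0 :=
  prod_ne_zero_iff.mpr fun _ _ => one_sub_pow_ne_zero_of_abs_ne_one hq (Nat.succ_ne_zero _)

lemma qPoch_succ (n : ℕ) : qPoch q (n + 1) = qPoch q n * (1 - q ^ (n + 1)) :=
  prod_range_succ _ n

lemma qbinom_div_qbinom_add (hq : |q| ≠ 1) {n k : ℕ} (hk : k ≤ n) :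
    qbinom q n k / qbinom q (n + k) k =
      qPoch q n ^ 2 / (qPoch q (n - k) * qPoch q (n + k)) := by
  have := qPoch_ne_zero hq k
  have := qPoch_ne_zero hq (n - k)
  rw [qbinom, qbinom, if_pos hk, if_pos (Nat.le_add_left k n), Nat.add_sub_cancel]
  field_simp

lemma qbinom_of_lt {n k : ℕ} (h : n < k) : qbinom q n k = 0 :=
  if_neg h.not_ge

lemma qHstarTwosTerm_of_lt (a : ℕ) {n k : ℕ} (h : n < k) : qHstarTwosTerm q a n k = 0 := by
  simp [qHstarTwosTerm, qbinom_of_lt h]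

lemma sum_qHstarTwosTerm_zero_partial (hq : |q| ≠ 1) {n k : ℕ} (hn : n ≠ 0) (hk : k ≤ n) :
    ∑ j ∈ Icc 1 k, qHstarTwosTerm q 0 n j =
      1 - (-1) ^ k * q ^ (k * (k + 1) / 2) *
        (qPoch q n ^ 2 / (qPoch q (n - k) * qPoch q (n + k))) * (1 - q ^ (n - k)) /
          (1 - q ^ n) := by
  have hqn := one_sub_pow_ne_zero_of_abs_ne_one hq hn
  induction k with
  | zero =>
    have := qPoch_ne_zero hq n
    rw [Icc_eq_empty (by omega), sum_empty]
    simp only [pow_zero, Nat.sub_zero, Nat.add_zero, one_mul]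
    field_simp
    ring
  | succ k ih =>
    obtain ⟨s, rfl⟩ : ∃ s, n = s + (k + 1) := ⟨n - (k + 1), by omega⟩
    have htri : (k + 1) * (k + 1 + 1) / 2 = k * (k + 1) / 2 + (k + 1) := by
      rw [show (k + 1) * (k + 1 + 1) = k * (k + 1) + (k + 1) * 2 by ring,
        Nat.add_mul_div_right _ _ two_pos]
    rw [sum_Icc_succ_top (by omega), ih (by omega), qHstarTwosTerm,
      qbinom_div_qbinom_add hq (by omega), Nat.add_sub_cancel, Nat.add_sub_cancel,
      mul_comm (k + 1) k, htri, show s + (k + 1) - k = s + 1 by omega,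
      show s + (k + 1) + (k + 1) = s + (2 * k + 1) + 1 by omega,
      show s + (k + 1) + k = s + (2 * k + 1) by omega, qPoch_succ s, qPoch_succ (s + (2 * k + 1))]
    have := qPoch_ne_zero hq s
    have := qPoch_ne_zero hq (s + (2 * k + 1))
    have := one_sub_pow_ne_zero_of_abs_ne_one hq (Nat.succ_ne_zero s)
    have := one_sub_pow_ne_zero_of_abs_ne_one hq (Nat.succ_ne_zero (s + (2 * k + 1)))
    field_simp
    ring

lemma sum_qHstarTwosTerm_zero (hq : |q| ≠ 1) {n : ℕ} (hn : n ≠ 0) :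
    ∑ k ∈ Icc 1 n, qHstarTwosTerm q 0 n k = 1 := by
  simp [sum_qHstarTwosTerm_zero_partial hq hn le_rfl]

lemma qbinom_ratio_succ (hq : |q| ≠ 1) {n k : ℕ} (hk : k ≠ 0) (hkn : k ≤ n + 1) :
    q ^ k / qnum q k ^ 2 * (qbinom q (n + 1) k / qbinom q (n + 1 + k) k) =
      q ^ k / qnum q k ^ 2 * (qbinom q n k / qbinom q (n + k) k) +
        q ^ (n + 1) / qnum q (n + 1) ^ 2 * (qbinom q (n + 1) k / qbinom q (n + 1 + k) k) := by
  rcases hkn.lt_or_eq with hkn | rfl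
  · obtain ⟨s, rfl⟩ : ∃ s, n = s + k := ⟨n - k, by omega⟩
    rw [qbinom_div_qbinom_add hq (by omega), qbinom_div_qbinom_add hq (by omega),
      show s + k + 1 - k = s + 1 by omega, Nat.add_sub_cancel,
      show s + k + 1 + k = s + 2 * k + 1 by omega, show s + k + k = s + 2 * k by omega,
      qPoch_succ s, qPoch_succ (s + 2 * k), qPoch_succ (s + k)]
    have := qPoch_ne_zero hq s
    have := qPoch_ne_zero hq (s + 2 * k)
    have := one_sub_pow_ne_zero_of_abs_ne_one hq hk
    have := one_sub_pow_ne_zero_of_abs_ne_one hq (Nat.succ_ne_zero s)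
    have := one_sub_pow_ne_zero_of_abs_ne_one hq (Nat.succ_ne_zero (s + k))
    have := one_sub_pow_ne_zero_of_abs_ne_one hq (Nat.succ_ne_zero (s + 2 * k))
    have : 1 - q ≠ 0 := by simpa using one_sub_pow_ne_zero_of_abs_ne_one hq one_ne_zero
    simp only [qnum]
    field_simp
    ring
  · rw [qbinom_of_lt (Nat.lt_succ_self n), zero_div, mul_zero, zero_add]

lemma qHstarTwosTerm_succ (hq : |q| ≠ 1) (a : ℕ) {n k : ℕ} (hk : k ≠ 0)
    (hkn : k ≤ n + 1) :
    qHstarTwosTerm q (a + 1) (n + 1) k =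
      qHstarTwosTerm q (a + 1) n k +
        q ^ (n + 1) / qnum q (n + 1) ^ 2 * qHstarTwosTerm q a (n + 1) k := by
  simp only [qHstarTwosTerm]
  linear_combination (1 + q ^ k) / qnum q k ^ (2 * a) * (-1 : ℝ) ^ (k - 1) *
    q ^ (k * (k - 1) / 2 + a * k) * qbinom_ratio_succ hq hk hkn

end

lemma qHstar_cons_succ (q : ℝ) (s : ℕ) (rest : List ℕ) (n : ℕ) :
    qHstar q (s :: rest) (n + 1) =
      qHstar q (s :: rest) n + q ^ (n + 1) / qnum q (n + 1) ^ s * qHstar q rest (n + 1) := by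
  rw [qHstar, qHstar, sum_Icc_succ_top (Nat.le_add_left 1 n)]

lemma qHstar_replicate_two_eq_sum {q : ℝ} (hq : |q| ≠ 1) (a : ℕ) {n : ℕ} (hn : n ≠ 0) :
    qHstar q (List.replicate a 2) n = ∑ k ∈ Icc 1 n, qHstarTwosTerm q a n k := by
  induction a generalizing n with
  | zero => rw [sum_qHstarTwosTerm_zero hq hn]; rfl
  | succ a iha =>
    clear hn
    rw [List.replicate_succ]
    induction n with
    | zero => simp [qHstar]
    | succ n ihn =>
      have hextend : ∑ k ∈ Icc 1 (n + 1), qHstarTwosTerm q (a + 1) n k =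
          ∑ k ∈ Icc 1 n, qHstarTwosTerm q (a + 1) n k := by
        rw [sum_Icc_succ_top (Nat.le_add_left 1 n), qHstarTwosTerm_of_lt _ (Nat.lt_succ_self n),
          add_zero]
      rw [qHstar_cons_succ, ihn, iha (Nat.succ_ne_zero n), mul_sum, ← hextend,
        ← sum_add_distrib]
      refine sum_congr rfl fun k hk => (qHstarTwosTerm_succ hq a ?_ ?_).symm <;>
        simp only [mem_Icc] at hk <;> omega

theorem stmt5 (q : ℝ) (hq0 : 0 < q) (hq1 : q < 1) (a n : ℕ) (hn : 1 ≤ n) :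
    qHstar q (List.replicate a 2) n
    = ∑ k ∈ Finset.Icc 1 n,
        (1 + q ^ k) / qnum q k ^ (2 * a) * (qbinom q n k / qbinom q (n + k) k) *
          (-1 : ℝ) ^ (k - 1) * q ^ (k * (k - 1) / 2 + a * k) :=
  qHstar_replicate_two_eq_sum (by rw [abs_of_pos hq0]; exact hq1.ne) a (by omega)
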